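/- arXiv:2510.00602 — 3 statements merged into one kernel-verified Lean document; each statement's English description precedes it below -/
import Mathlib

section
/- Let Σ be a real symmetric positive definite d×d matrix, let α ∈ (0,1), L > 0, β ≥ 0, κ_l ≥ 0, r_l > 0 with κ_l + α r_l > 0, and suppose λ_min(Σ) ≥ (2Lβ/(κ_l + α r_l))². Let x* ∈ ℝ^d with ‖x*‖₂ ≤ L, let θ* ∈ ℝ^d and real numbers r_b, κ_b satisfy x*ᵀθ* = r_b + κ_b with κ_b ≥ κ_l and r_b ≥ r_l, and let θ̂ ∈ ℝ^d satisfy ‖θ̂ − θ*‖_Σ ≤ β. Then every v ∈ ℝ^d with ‖v − θ̂‖_Σ ≤ β satisfies x*ᵀv ≥ (1−α) r_b. -/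
open Matrix Finset
open scoped MatrixOrder

/-- Euclidean (ℓ²) norm of a vector in ℝ^n. -/
noncomputable def eucNorm {n : ℕ} (v : Fin n → ℝ) : ℝ := Real.sqrt (∑ i, (v i) ^ 2)

/-- The weighted norm `‖v‖_A = √(vᵀ A v)` associated with a matrix `A`. -/
noncomputable def wnorm {d : ℕ} (A : Matrix (Fin d) (Fin d) ℝ) (v : Fin d → ℝ) : ℝ :=
  Real.sqrt (v ⬝ᵥ A.mulVec v)

/-- Smallest eigenvalue of a Hermitian (real symmetric) matrix. -/
noncomputable def lambdaMin {d : ℕ} (A : Matrix (Fin d) (Fin d) ℝ) (hA : A.IsHermitian) : ℝ :=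
  ⨅ i, hA.eigenvalues i

lemma eucNorm_eq {n : ℕ} (v : Fin n → ℝ) :
    eucNorm v = ‖(WithLp.equiv 2 (Fin n → ℝ)).symm v‖ := by
  rw [eucNorm, EuclideanSpace.norm_eq]
  simp [sq_abs]

lemma eucNorm_nonneg {n : ℕ} (v : Fin n → ℝ) : 0 ≤ eucNorm v := Real.sqrt_nonneg _

lemma eucNorm_add_le {n : ℕ} (a b : Fin n → ℝ) :
    eucNorm (a + b) ≤ eucNorm a + eucNorm b := by
  simp only [eucNorm_eq]
  rw [show (WithLp.equiv 2 (Fin n → ℝ)).symm (a + b)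
      = (WithLp.equiv 2 (Fin n → ℝ)).symm a + (WithLp.equiv 2 (Fin n → ℝ)).symm b from rfl]
  exact norm_add_le _ _

lemma abs_dot_le {n : ℕ} (x y : Fin n → ℝ) : |x ⬝ᵥ y| ≤ eucNorm x * eucNorm y := by
  simp only [eucNorm_eq]
  have := abs_real_inner_le_norm ((WithLp.equiv 2 (Fin n → ℝ)).symm x)
    ((WithLp.equiv 2 (Fin n → ℝ)).symm y)
  rw [show (inner ℝ ((WithLp.equiv 2 (Fin n → ℝ)).symm x) ((WithLp.equiv 2 (Fin n → ℝ)).symm y) : ℝ)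
      = x ⬝ᵥ y from ?_] at this
  · exact this
  · simp [PiLp.inner_apply, dotProduct, RCLike.inner_apply, mul_comm]


lemma wnorm_eq_eucNorm {d : ℕ} {A : Matrix (Fin d) (Fin d) ℝ} (hA : A.PosDef) (v : Fin d → ℝ) :
    wnorm A v = eucNorm (CFC.sqrt A *ᵥ v) := by
  have hBA : CFC.sqrt A * CFC.sqrt A = A := CFC.sqrt_mul_sqrt_self A hA.posSemidef.nonneg
  have hBh : (CFC.sqrt A).IsHermitian := (CFC.sqrt_nonneg A).posSemidef.1
  rw [wnorm, eucNorm]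
  congr 1
  have hBt : (CFC.sqrt A).transpose = CFC.sqrt A := by
    simpa [Matrix.IsHermitian] using hBh
  generalize CFC.sqrt A = B at hBA hBt
  rw [← hBA, ← mulVec_mulVec, dotProduct_mulVec, ← mulVec_transpose, hBt]
  simp [dotProduct, sq]

lemma smul_dot_le_quad {d : ℕ} {A : Matrix (Fin d) (Fin d) ℝ} (hA : A.PosDef)
    (u : Fin d → ℝ) : lambdaMin A hA.1 * (u ⬝ᵥ u) ≤ u ⬝ᵥ A *ᵥ u := by
  classical
  cases isEmpty_or_nonempty (Fin d) with
  | inl h => simp [dotProduct]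
  | inr h =>
  set l := lambdaMin A hA.1 with hl
  have hle : ∀ i, l ≤ hA.1.eigenvalues i := fun i =>
    ciInf_le (Set.Finite.bddBelow (Set.finite_range _)) i
  -- A - l • 1 is PosSemidef
  have hps : (A - l • (1 : Matrix (Fin d) (Fin d) ℝ)).PosSemidef := by
    have hspec := hA.1.spectral_theorem
    simp only [Unitary.conjStarAlgAut_apply] at hspec
    set V := (hA.1.eigenvectorUnitary : Matrix (Fin d) (Fin d) ℝ) with hV
    have hVV : V * star V = 1 := Unitary.mul_star_self_of_mem hA.1.eigenvectorUnitary.2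
    have key : A - l • 1 = V * (diagonal (fun i => hA.1.eigenvalues i - l)) * star V := by
      have : (diagonal (fun i => hA.1.eigenvalues i - l))
          = diagonal (RCLike.ofReal ∘ hA.1.eigenvalues) - l • (1 : Matrix (Fin d) (Fin d) ℝ) := by
        ext i j
        by_cases h : i = j <;>
          simp [h, Matrix.one_apply, diagonal_apply, RCLike.ofReal_real_eq_id]
      rw [this, Matrix.mul_sub, Matrix.sub_mul, ← hspec]
      congr 1
      rw [Matrix.mul_smul, Matrix.smul_mul, mul_one, hVV]
    rw [key, show star V = Vᴴ from rfl]
    exact (posSemidef_diagonal_iff.mpr (fun i => sub_nonneg.mpr (hle i))).mul_mul_conjTranspose_same V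
  have := hps.dotProduct_mulVec_nonneg u
  have hstar : star u = u := by funext i; simp
  rw [hstar, sub_mulVec, dotProduct_sub, smul_mulVec, one_mulVec, dotProduct_smul,
    smul_eq_mul, sub_nonneg] at this
  exact this

set_option maxHeartbeats 1000000 in
/-- safe-set inclusion of the optimal action once the Gram matrix is
sufficiently excited: if `λ_min(Σ) ≥ (2Lβ/(κ_l + α r_l))²`, then every `v` in the
confidence ellipsoid around `θ̂` satisfies `x*ᵀv ≥ (1−α) r_b`. -/
theorem optimal_action_in_safe_set (d : ℕ) (Sg : Matrix (Fin d) (Fin d) ℝ)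
    (hSg : Sg.PosDef)
    (α L β κl rl : ℝ) (hα0 : 0 < α) (hα1 : α < 1) (hL : 0 < L) (hβ : 0 ≤ β)
    (hκl : 0 ≤ κl) (hrl : 0 < rl) (hpos : 0 < κl + α * rl)
    (hmin : lambdaMin Sg hSg.1 ≥ (2 * L * β / (κl + α * rl)) ^ 2)
    (xstar θstar θhat : Fin d → ℝ) (hx : eucNorm xstar ≤ L)
    (rb κb : ℝ) (hdecomp : xstar ⬝ᵥ θstar = rb + κb)
    (hκb : κb ≥ κl) (hrb : rb ≥ rl)
    (hconf : wnorm Sg (θhat - θstar) ≤ β) :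
    ∀ v : Fin d → ℝ, wnorm Sg (v - θhat) ≤ β → xstar ⬝ᵥ v ≥ (1 - α) * rb := by
  intro v hv
  rcases Nat.eq_zero_or_pos d with hd | hd
  · exfalso
    have h0 : xstar ⬝ᵥ θstar = 0 := by
      subst hd; simp [dotProduct]
    nlinarith
  haveI : Nonempty (Fin d) := Fin.pos_iff_nonempty.mp hd
  set u : Fin d → ℝ := v - θstar with hu
  -- triangle inequality: wnorm Sg u ≤ 2β
  have htri : wnorm Sg u ≤ 2 * β := by
    have h1 : u = (v - θhat) + (θhat - θstar) := by rw [hu]; abel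
    calc wnorm Sg u = eucNorm (CFC.sqrt Sg *ᵥ ((v - θhat) + (θhat - θstar))) := by
            rw [← h1, wnorm_eq_eucNorm hSg]
      _ = eucNorm (CFC.sqrt Sg *ᵥ (v - θhat) + CFC.sqrt Sg *ᵥ (θhat - θstar)) := by
            rw [mulVec_add]
      _ ≤ eucNorm (CFC.sqrt Sg *ᵥ (v - θhat)) + eucNorm (CFC.sqrt Sg *ᵥ (θhat - θstar)) :=
            eucNorm_add_le _ _
      _ = wnorm Sg (v - θhat) + wnorm Sg (θhat - θstar) := by
            rw [wnorm_eq_eucNorm hSg, wnorm_eq_eucNorm hSg]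
      _ ≤ β + β := add_le_add hv hconf
      _ = 2 * β := by ring
  set l := lambdaMin Sg hSg.1 with hldef
  have hlpos : 0 < l := by
    obtain ⟨i⟩ := (inferInstance : Nonempty (Fin d))
    obtain ⟨j, -, hj⟩ := Finset.exists_min_image Finset.univ (fun i => hSg.1.eigenvalues i)
      ⟨i, Finset.mem_univ i⟩
    have : l = hSg.1.eigenvalues j :=
      le_antisymm (ciInf_le (Set.Finite.bddBelow (Set.finite_range _)) j)
        (le_ciInf fun k => hj k (Finset.mem_univ k))
    rw [this]
    exact hSg.eigenvalues_pos j
  have hsl : 0 < Real.sqrt l := Real.sqrt_pos.mpr hlpos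
  -- √l ≥ 2Lβ/(κl+αrl)
  have hslge : 2 * L * β / (κl + α * rl) ≤ Real.sqrt l := by
    have h1 : 0 ≤ 2 * L * β / (κl + α * rl) := by positivity
    calc 2 * L * β / (κl + α * rl) = Real.sqrt ((2 * L * β / (κl + α * rl)) ^ 2) :=
            (Real.sqrt_sq h1).symm
      _ ≤ Real.sqrt l := Real.sqrt_le_sqrt hmin
  -- √l * ‖u‖ ≤ 2β
  have hquad : l * (u ⬝ᵥ u) ≤ u ⬝ᵥ Sg *ᵥ u := smul_dot_le_quad hSg u
  have huu : u ⬝ᵥ u = eucNorm u ^ 2 := by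
    rw [eucNorm, Real.sq_sqrt (by positivity)]
    simp [dotProduct, sq]
  have hwsq : u ⬝ᵥ Sg *ᵥ u ≤ (2 * β) ^ 2 := by
    have h0 : 0 ≤ u ⬝ᵥ Sg *ᵥ u := by
      rcases eq_or_ne u 0 with h | h
      · simp [h]
      · exact le_of_lt (by simpa using hSg.dotProduct_mulVec_pos h)
    have := Real.sqrt_le_sqrt (le_of_eq (rfl : u ⬝ᵥ Sg *ᵥ u = u ⬝ᵥ Sg *ᵥ u))
    calc u ⬝ᵥ Sg *ᵥ u = Real.sqrt (u ⬝ᵥ Sg *ᵥ u) ^ 2 := (Real.sq_sqrt h0).symm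
      _ = wnorm Sg u ^ 2 := by rw [wnorm]
      _ ≤ (2 * β) ^ 2 := by
          have h2 : 0 ≤ wnorm Sg u := Real.sqrt_nonneg _
          nlinarith [htri]
  have hnu : 0 ≤ eucNorm u := eucNorm_nonneg u
  have hkey : Real.sqrt l * eucNorm u ≤ 2 * β := by
    have h1 : (Real.sqrt l * eucNorm u) ^ 2 ≤ (2 * β) ^ 2 := by
      have : Real.sqrt l ^ 2 = l := Real.sq_sqrt (le_of_lt hlpos)
      nlinarith [hquad, hwsq, huu]
    have h2 : 0 ≤ Real.sqrt l * eucNorm u := by positivity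
    nlinarith
  -- L * ‖u‖ ≤ κl + α rl
  have hLnu : L * eucNorm u ≤ κl + α * rl := by
    have h1 : 2 * L * β ≤ (κl + α * rl) * Real.sqrt l := by
      rw [div_le_iff₀ hpos] at hslge
      linarith [hslge]
    nlinarith [hkey, hsl, hnu, hL]
  -- conclude
  have hdot : |xstar ⬝ᵥ u| ≤ L * eucNorm u := by
    calc |xstar ⬝ᵥ u| ≤ eucNorm xstar * eucNorm u := abs_dot_le _ _
      _ ≤ L * eucNorm u := by nlinarith [eucNorm_nonneg xstar]
  have hxu : xstar ⬝ᵥ u ≥ -(κl + α * rl) := by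
    have := neg_abs_le (xstar ⬝ᵥ u)
    linarith [hdot, hLnu]
  have hsplit : xstar ⬝ᵥ v = xstar ⬝ᵥ θstar + xstar ⬝ᵥ u := by
    rw [hu]
    simp [dotProduct_sub]
  rw [hsplit, hdecomp]
  nlinarith [hxu]
end

section
/- Let α ∈ (0,1), S ≥ 0, and 0 < r_l ≤ r_h, and set ρ := α r_l/(S + r_h). Let θ, x_b, ζ ∈ ℝ^d with ‖θ‖₂ ≤ S, ‖ζ‖₂ ≤ 1, and x_bᵀθ = r_b where r_l ≤ r_b ≤ r_h. Then the conservative action x_cons := (1−ρ)x_b + ρζ satisfies x_consᵀθ ≥ (1−α) r_b. -/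
open Matrix Finset

/-- the conservative action `x_cons = (1−ρ)x_b + ρζ`, with mixing weight
`ρ = α r_l/(S + r_h)`, always satisfies the stage-wise conservative constraint
`x_consᵀθ ≥ (1−α) r_b`. -/
theorem conservative_action_safe (d : ℕ) (α S rl rh : ℝ)
    (hα0 : 0 < α) (hα1 : α < 1) (hS : 0 ≤ S) (hrl : 0 < rl) (hlh : rl ≤ rh)
    (θ xb ζ : Fin d → ℝ) (hθ : eucNorm θ ≤ S) (hζ : eucNorm ζ ≤ 1)
    (rb : ℝ) (hrb : xb ⬝ᵥ θ = rb) (hrbl : rl ≤ rb) (hrbh : rb ≤ rh) :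
    ((1 - α * rl / (S + rh)) • xb + (α * rl / (S + rh)) • ζ) ⬝ᵥ θ ≥ (1 - α) * rb := by
  set ρ : ℝ := α * rl / (S + rh) with hρ
  have hSrh : 0 < S + rh := by linarith
  have hρ0 : 0 ≤ ρ := by positivity
  -- Cauchy-Schwarz: ζ ⬝ᵥ θ ≥ -S
  have hcs : -(ζ ⬝ᵥ θ) ≤ S := by
    have h1 : ∑ i, (-ζ i) * θ i ≤
        Real.sqrt (∑ i, (-ζ i) ^ 2) * Real.sqrt (∑ i, (θ i) ^ 2) :=
      Real.sum_mul_le_sqrt_mul_sqrt _ _ _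
    simp only [neg_sq] at h1
    have hn1 : Real.sqrt (∑ i, (ζ i) ^ 2) ≤ 1 := hζ
    have hn2 : Real.sqrt (∑ i, (θ i) ^ 2) ≤ S := hθ
    have hnn : 0 ≤ Real.sqrt (∑ i, (θ i) ^ 2) := Real.sqrt_nonneg _
    have : Real.sqrt (∑ i, (ζ i) ^ 2) * Real.sqrt (∑ i, (θ i) ^ 2) ≤ 1 * S := by
      exact mul_le_mul hn1 hn2 hnn (by linarith)
    calc -(ζ ⬝ᵥ θ) = ∑ i, (-ζ i) * θ i := by
          simp [dotProduct, Finset.sum_neg_distrib, neg_mul]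
      _ ≤ _ := h1
      _ ≤ 1 * S := this
      _ = S := one_mul S
  have hexp : ((1 - ρ) • xb + ρ • ζ) ⬝ᵥ θ = (1 - ρ) * rb + ρ * (ζ ⬝ᵥ θ) := by
    rw [add_dotProduct, smul_dotProduct, smul_dotProduct,
      hrb, smul_eq_mul, smul_eq_mul]
  rw [hexp]
  have key : ρ * (rb + S) ≤ α * rb := by
    have h1 : ρ * (rb + S) = α * rl * ((rb + S) / (S + rh)) := by
      rw [hρ]; ring
    have h2 : (rb + S) / (S + rh) ≤ 1 := by
      rw [div_le_one hSrh]; linarith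
    have h3 : α * rl * ((rb + S) / (S + rh)) ≤ α * rl := by
      calc α * rl * ((rb + S) / (S + rh)) ≤ α * rl * 1 :=
        mul_le_mul_of_nonneg_left h2 (by positivity)
      _ = α * rl := mul_one _
    have h4 : α * rl ≤ α * rb := by nlinarith
    linarith [h1 ▸ h3]
  have hcs' : ρ * (ζ ⬝ᵥ θ) ≥ -(ρ * S) := by nlinarith
  nlinarith
end

section
/- Let λ > 0, L > 0, M ≥ 1, d ≥ 1, and let x_1,…,x_M ∈ ℝ^d with ‖x_k‖₂ ≤ L for all k. Then det(λ I_d + ∑_{k=1}^M x_k x_kᵀ) ≤ (λ + M L² / d)^d. -/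
open Matrix Finset

-- trace = sum of eigenvalues
lemma trace_eq_sum_eigs {n : ℕ} {A : Matrix (Fin n) (Fin n) ℝ} (hA : A.IsHermitian) :
    A.trace = ∑ i, hA.eigenvalues i := by
  simpa using hA.trace_eq_sum_eigenvalues

lemma psd_vecMulVec {n : ℕ} (v : Fin n → ℝ) : (Matrix.vecMulVec v v).PosSemidef := by
  rw [Matrix.vecMulVec_eq (Fin 1)]
  have := Matrix.posSemidef_conjTranspose_mul_self (Matrix.replicateRow (Fin 1) v)
  simp at this
  convert this <;> rfl

lemma psd_sum {d M : ℕ} (f : Fin M → Matrix (Fin d) (Fin d) ℝ) (hf : ∀ k, (f k).PosSemidef) :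
    (∑ k, f k).PosSemidef := by
  classical
  induction (Finset.univ : Finset (Fin M)) using Finset.induction with
  | empty => simpa using (Matrix.PosSemidef.zero (n := Fin d) (R := ℝ))
  | insert _ _ h ih =>
    rw [Finset.sum_insert h]
    exact (hf _).add ih

/-- determinant bound for the regularized Gram matrix:
`det(λI + ∑ₖ xₖxₖᵀ) ≤ (λ + ML²/d)^d` when `‖xₖ‖₂ ≤ L` for all `k`. -/
theorem gram_det_bound (d M : ℕ) (hd : 1 ≤ d) (hM : 1 ≤ M)
    (lam L : ℝ) (hlam : 0 < lam) (hL : 0 < L)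
    (x : Fin M → Fin d → ℝ) (hx : ∀ k, eucNorm (x k) ≤ L) :
    (lam • (1 : Matrix (Fin d) (Fin d) ℝ) + ∑ k, Matrix.vecMulVec (x k) (x k)).det
      ≤ (lam + M * L ^ 2 / d) ^ d := by
  set A : Matrix (Fin d) (Fin d) ℝ :=
    lam • (1 : Matrix (Fin d) (Fin d) ℝ) + ∑ k, Matrix.vecMulVec (x k) (x k) with hA_def
  have hdpos : (0:ℝ) < d := by exact_mod_cast hd
  -- PSD
  have hPSD : A.PosSemidef := by
    apply Matrix.PosSemidef.add
    · rw [Matrix.smul_one_eq_diagonal]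
      exact Matrix.PosSemidef.diagonal (fun i => hlam.le)
    · exact psd_sum _ (fun k => psd_vecMulVec (x k))
  have hH : A.IsHermitian := hPSD.isHermitian
  -- trace bound
  have htr : A.trace ≤ lam * d + M * L ^ 2 := by
    have h1 : A.trace = lam * d + ∑ k, ∑ i, (x k i)^2 := by
      simp only [hA_def, trace_add, trace_smul, trace_one, trace_sum, smul_eq_mul,
        Fintype.card_fin]
      congr 1
      apply Finset.sum_congr rfl
      intro k _
      simp [Matrix.trace, Matrix.diag, Matrix.vecMulVec_apply, sq]
    rw [h1]
    gcongr
    calc ∑ k, ∑ i, (x k i)^2 ≤ ∑ _k : Fin M, L ^ 2 := by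
          apply Finset.sum_le_sum
          intro k _
          have h2 : Real.sqrt (∑ i, (x k i)^2) ≤ L := hx k
          have h3 : (0:ℝ) ≤ ∑ i, (x k i)^2 := Finset.sum_nonneg fun i _ => sq_nonneg _
          calc ∑ i, (x k i)^2 = (Real.sqrt (∑ i, (x k i)^2))^2 := (Real.sq_sqrt h3).symm
            _ ≤ L^2 := pow_le_pow_left₀ (Real.sqrt_nonneg _) h2 2
      _ = M * L ^ 2 := by simp [Finset.sum_const]
  -- eigenvalues
  set μ := hH.eigenvalues with hμ
  have hμnn : ∀ i, 0 ≤ μ i := hPSD.eigenvalues_nonneg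
  have hdet : A.det = ∏ i, μ i := by
    have := hH.det_eq_prod_eigenvalues
    simpa using this
  have htrace : A.trace = ∑ i, μ i := trace_eq_sum_eigs hH
  -- AM-GM
  have hAMGM : ∏ i, μ i ≤ ((∑ i, μ i) / d) ^ d := by
    have hw : ∀ i ∈ (Finset.univ : Finset (Fin d)), (0:ℝ) ≤ (d:ℝ)⁻¹ := fun _ _ => by positivity
    have hw' : ∑ _i : Fin d, (d:ℝ)⁻¹ = 1 := by
      simp [Finset.sum_const]
      field_simp
    have key := Real.geom_mean_le_arith_mean_weighted Finset.univ (fun _ => (d:ℝ)⁻¹) μ hw hw'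
      (fun i _ => hμnn i)
    have hprod : ∏ i, μ i = (∏ i, μ i ^ ((d:ℝ)⁻¹)) ^ d := by
      rw [← Finset.prod_pow]
      apply Finset.prod_congr rfl
      intro i _
      rw [← Real.rpow_natCast (μ i ^ ((d:ℝ)⁻¹)) d, ← Real.rpow_mul (hμnn i),
        inv_mul_cancel₀ (ne_of_gt hdpos), Real.rpow_one]
    rw [hprod]
    have hbase : (0:ℝ) ≤ ∏ i, μ i ^ ((d:ℝ)⁻¹) :=
      Finset.prod_nonneg fun i _ => Real.rpow_nonneg (hμnn i) _
    calc (∏ i, μ i ^ ((d:ℝ)⁻¹)) ^ d ≤ (∑ i, (d:ℝ)⁻¹ * μ i) ^ d := pow_le_pow_left₀ hbase key d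
      _ = ((∑ i, μ i) / d) ^ d := by rw [← Finset.mul_sum]; ring_nf
  -- conclude
  rw [hdet]
  refine hAMGM.trans ?_
  have h4 : (∑ i, μ i) / d ≤ lam + M * L ^ 2 / d := by
    rw [← htrace, div_le_iff₀ hdpos]
    calc A.trace ≤ lam * d + M * L^2 := htr
      _ = (lam + M * L ^ 2 / d) * d := by field_simp
  exact pow_le_pow_left₀ (div_nonneg (Finset.sum_nonneg fun i _ => hμnn i) hdpos.le) h4 d
end
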